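/- Araki relative entropy in the finite-dimensional block setting equals the algebraic relative entropy: let A range over a finite index set, let (p_A), (q_A) be probability distributions with strictly positive entries, and for each A let H_A be a finite-dimensional complex Hilbert space with orthonormal basis (e_i^A), let ρ_A and σ_A be positive definite density matrices on H_A, and let |ψ_A⟩ = (ρ_A^{1/2} ⊗ I) Σ_i e_i^A ⊗ e_i^A ∈ H_A ⊗ H_A and |Ψ⟩ = ⊕_A √p_A |ψ_A⟩ ∈ ⊕_A (H_A ⊗ H_A). Define Δ = ⊕_A (q_A/p_A) σ_A ⊗ (ρ̄_A)^{−1}, where ρ̄_A is the reduced density matrix of |ψ_A⟩ on the second factor. Then −⟨Ψ| log Δ |Ψ⟩ = Σ_A p_A log(p_A/q_A) + Σ_A p_A [Tr(ρ_A log ρ_A) − Tr(ρ_A log σ_A)]. -/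

import Mathlib

open Matrix
open scoped Kronecker ComplexOrder

/-- Real power of a Hermitian matrix via the spectral functional calculus
(junk value `0` on non-Hermitian matrices). -/
noncomputable def mpow {m : Type*} [Fintype m] [DecidableEq m]
    (A : Matrix m m ℂ) (r : ℝ) : Matrix m m ℂ :=
  if hA : A.IsHermitian then
    (hA.eigenvectorUnitary : Matrix m m ℂ) *
      Matrix.diagonal (fun i => ((hA.eigenvalues i ^ r : ℝ) : ℂ)) *
      (star (hA.eigenvectorUnitary : Matrix m m ℂ))
  else 0

/-- Logarithm of a Hermitian matrix via the spectral functional calculus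
(junk value `0` on non-Hermitian matrices). -/
noncomputable def mlog {m : Type*} [Fintype m] [DecidableEq m]
    (A : Matrix m m ℂ) : Matrix m m ℂ :=
  if hA : A.IsHermitian then
    (hA.eigenvectorUnitary : Matrix m m ℂ) *
      Matrix.diagonal (fun i => ((Real.log (hA.eigenvalues i) : ℝ) : ℂ)) *
      (star (hA.eigenvectorUnitary : Matrix m m ℂ))
  else 0

/-- A density matrix: positive semidefinite with unit trace. -/
def IsDensity {m : Type*} [Fintype m] [DecidableEq m] (A : Matrix m m ℂ) : Prop :=
  A.PosSemidef ∧ A.trace = 1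

/-- Sandwiched Rényi relative entropy
`S_n(ρ‖σ) = (n-1)⁻¹ log Tr[(σ^{(1-n)/(2n)} ρ σ^{(1-n)/(2n)})^n]`. -/
noncomputable def SRenyi {m : Type*} [Fintype m] [DecidableEq m]
    (n : ℝ) (ρ σ : Matrix m m ℂ) : ℝ :=
  (n - 1)⁻¹ *
    Real.log ((mpow (mpow σ ((1 - n) / (2 * n)) * ρ * mpow σ ((1 - n) / (2 * n))) n).trace.re)

/-- Quantum relative entropy `S(ρ‖σ) = Tr(ρ log ρ) - Tr(ρ log σ)`. -/
noncomputable def relEnt {m : Type*} [Fintype m] [DecidableEq m]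
    (ρ σ : Matrix m m ℂ) : ℝ :=
  ((ρ * mlog ρ).trace - (ρ * mlog σ).trace).re

/-- von Neumann entropy `S(τ) = -Tr(τ log τ)`. -/
noncomputable def vnEnt {m : Type*} [Fintype m] [DecidableEq m]
    (τ : Matrix m m ℂ) : ℝ :=
  -((τ * mlog τ).trace.re)

/-!
The reduced density matrix of the purification `ψ_A = vec (ρ_A^{1/2})ᵀ` is `ρ_Aᵀ`, so each block
of `Δ` is `(q_A/p_A) σ_A ⊗ (ρ_Aᵀ)⁻¹`, and its logarithm splits as
`log (q_A/p_A) + log σ_A ⊗ 1 - 1 ⊗ (log ρ_A)ᵀ`. The expectation of `X ⊗ Y` in `vec Rᵀ` is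
`Tr (Rᴴ X R Yᵀ)`; for `R = ρ_A^{1/2}` the three terms give `log (q_A/p_A)`, `Tr (ρ_A log σ_A)` and
`-Tr (ρ_A log ρ_A)`, and summing over the blocks with weights `p_A` gives the claim.
All identities for the logarithm come from the fact that the spectral calculus does not depend on
the unitary diagonalization used to compute it.
-/

open Unitary

section Intertwining

variable {m n : Type*} [Fintype m] [DecidableEq m] [Fintype n] [DecidableEq n]

lemma mul_diagonal_comp_eq_of_mul_diagonal_eq {W : Matrix m n ℂ} {d : n → ℝ} {e : m → ℝ}
    (h : W * diagonal (fun j => (d j : ℂ)) = diagonal (fun i => (e i : ℂ)) * W) (g : ℝ → ℝ) :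
    W * diagonal (fun j => (g (d j) : ℂ)) = diagonal (fun i => (g (e i) : ℂ)) * W := by
  ext i j
  have hij := congr_fun₂ h i j
  simp only [mul_diagonal, diagonal_mul] at hij ⊢
  rcases eq_or_ne (W i j) 0 with h0 | h0
  · simp [h0]
  · have hde : d j = e i := by exact_mod_cast mul_left_cancel₀ h0 (hij.trans (mul_comm _ _))
    rw [hde, mul_comm]

lemma conj_diagonal_comp_eq_of_conj_diagonal_eq {U V : unitaryGroup m ℂ} {d e : m → ℝ}
    (h : conjStarAlgAut ℂ _ U (diagonal fun i => (d i : ℂ)) =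
      conjStarAlgAut ℂ _ V (diagonal fun i => (e i : ℂ))) (g : ℝ → ℝ) :
    conjStarAlgAut ℂ _ U (diagonal fun i => (g (d i) : ℂ)) =
      conjStarAlgAut ℂ _ V (diagonal fun i => (g (e i) : ℂ)) := by
  have hU := star_mul_self_of_mem U.2
  have hU' := mul_star_self_of_mem U.2
  have hV := star_mul_self_of_mem V.2
  have hV' := mul_star_self_of_mem V.2
  set W : Matrix m m ℂ := star (V : Matrix m m ℂ) * U
  have hW : W * diagonal (fun i => (d i : ℂ)) = diagonal (fun i => (e i : ℂ)) * W := by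
    have := congr_arg (fun X => star (V : Matrix m m ℂ) * X * U) h
    simp only [conjStarAlgAut_apply] at this
    simpa [W, mul_assoc, hU, ← mul_assoc _ (V : Matrix m m ℂ), hV] using this
  have hUW : (U : Matrix m m ℂ) = V * W := by simp [W, ← mul_assoc, hV']
  have hWU : W * star (U : Matrix m m ℂ) = star (V : Matrix m m ℂ) := by
    simp [W, mul_assoc, hU']
  simp only [conjStarAlgAut_apply]
  calc (U : Matrix m m ℂ) * diagonal (fun i => (g (d i) : ℂ)) * star (U : Matrix m m ℂ)
      = V * (W * diagonal fun i => (g (d i) : ℂ)) * star (U : Matrix m m ℂ) := by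
        rw [← mul_assoc, ← hUW]
    _ = V * diagonal (fun i => (g (e i) : ℂ)) * (W * star (U : Matrix m m ℂ)) := by
        rw [mul_diagonal_comp_eq_of_mul_diagonal_eq hW g]; simp only [mul_assoc]
    _ = V * diagonal (fun i => (g (e i) : ℂ)) * star (V : Matrix m m ℂ) := by rw [hWU]

end Intertwining

namespace Matrix.UnitaryGroup

variable {m n ι : Type*} [Fintype m] [DecidableEq m] [Fintype n] [DecidableEq n]
  [Fintype ι] [DecidableEq ι] {m' : ι → Type*} [∀ i, Fintype (m' i)] [∀ i, DecidableEq (m' i)]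

def kronecker (U : unitaryGroup m ℂ) (V : unitaryGroup n ℂ) : unitaryGroup (m × n) ℂ :=
  ⟨(U : Matrix m m ℂ) ⊗ₖ (V : Matrix n n ℂ), kronecker_mem_unitary U.2 V.2⟩

def blockDiagonal' (U : ∀ i, unitaryGroup (m' i) ℂ) : unitaryGroup ((i : ι) × m' i) ℂ :=
  ⟨Matrix.blockDiagonal' fun i => (U i : Matrix (m' i) (m' i) ℂ), by
    rw [mem_unitaryGroup_iff, star_eq_conjTranspose, blockDiagonal'_conjTranspose,
      ← blockDiagonal'_mul]
    simp_rw [← star_eq_conjTranspose, mul_star_self_of_mem (U _).2]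
    exact blockDiagonal'_one⟩

lemma conjStarAlgAut_kronecker_kronecker (U : unitaryGroup m ℂ) (V : unitaryGroup n ℂ)
    (X : Matrix m m ℂ) (Y : Matrix n n ℂ) :
    conjStarAlgAut ℂ (Matrix (m × n) (m × n) ℂ) (kronecker U V) (X ⊗ₖ Y) =
      conjStarAlgAut ℂ (Matrix m m ℂ) U X ⊗ₖ conjStarAlgAut ℂ (Matrix n n ℂ) V Y := by
  simp only [conjStarAlgAut_apply, kronecker, star_eq_conjTranspose, conjTranspose_kronecker,
    mul_kronecker_mul]

lemma conjStarAlgAut_blockDiagonal'_blockDiagonal' (U : ∀ i, unitaryGroup (m' i) ℂ)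
    (X : ∀ i, Matrix (m' i) (m' i) ℂ) :
    conjStarAlgAut ℂ _ (blockDiagonal' U) (Matrix.blockDiagonal' X) =
      Matrix.blockDiagonal' fun i => conjStarAlgAut ℂ _ (U i) (X i) := by
  simp only [conjStarAlgAut_apply, blockDiagonal', star_eq_conjTranspose,
    blockDiagonal'_conjTranspose, blockDiagonal'_mul]

lemma conjStarAlgAut_map_star_transpose (U : unitaryGroup m ℂ) (X : Matrix m m ℂ) :
    conjStarAlgAut ℂ _ (map_star U) Xᵀ = (conjStarAlgAut ℂ _ U X)ᵀ := by
  simp only [conjStarAlgAut_apply, map_star_coe, transpose_mul, star_eq_conjTranspose, mul_assoc]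
  congr 2
  ext i j
  simp

end Matrix.UnitaryGroup

section SpectralFunctions

variable {m n ι : Type*} [Fintype m] [DecidableEq m] [Fintype n] [DecidableEq n]

lemma mlog_of_isHermitian {A : Matrix m m ℂ} (hA : A.IsHermitian) :
    mlog A = conjStarAlgAut ℂ _ hA.eigenvectorUnitary
      (diagonal fun i => (Real.log (hA.eigenvalues i) : ℂ)) :=
  dif_pos hA

lemma isHermitian_conj_diagonal (U : unitaryGroup m ℂ) (d : m → ℝ) :
    (conjStarAlgAut ℂ _ U (diagonal fun i => (d i : ℂ))).IsHermitian :=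
  have hD : IsSelfAdjoint (diagonal fun i => (d i : ℂ)) :=
    isHermitian_diagonal_of_self_adjoint _ (by ext; simp)
  hD.map _

lemma isHermitian_mpow (A : Matrix m m ℂ) (r : ℝ) : (mpow A r).IsHermitian := by
  unfold mpow
  split_ifs with hA
  · exact isHermitian_conj_diagonal hA.eigenvectorUnitary _
  · exact isHermitian_zero

lemma mpow_half_mul_self {A : Matrix m m ℂ} (hA : A.PosSemidef) :
    mpow A (1 / 2) * mpow A (1 / 2) = A := by
  have hpow : mpow A (1 / 2) = conjStarAlgAut ℂ _ hA.1.eigenvectorUnitary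
      (diagonal fun i => ((hA.1.eigenvalues i ^ (1 / 2 : ℝ) : ℝ) : ℂ)) := dif_pos hA.1
  conv_rhs => rw [hA.1.spectral_theorem]
  rw [hpow, ← map_mul, diagonal_mul_diagonal]
  congr; ext i
  rw [← Real.sqrt_eq_rpow, ← Complex.ofReal_mul, Real.mul_self_sqrt (hA.eigenvalues_nonneg i)]
  rfl

lemma mlog_conj_diagonal (U : unitaryGroup m ℂ) (d : m → ℝ) :
    mlog (conjStarAlgAut ℂ _ U (diagonal fun i => (d i : ℂ))) =
      conjStarAlgAut ℂ _ U (diagonal fun i => (Real.log (d i) : ℂ)) := by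
  have hA := isHermitian_conj_diagonal U d
  rw [mlog_of_isHermitian hA]
  exact conj_diagonal_comp_eq_of_conj_diagonal_eq hA.spectral_theorem.symm Real.log

lemma Matrix.IsHermitian.exists_conj_diagonal {A : Matrix m m ℂ} (hA : A.IsHermitian) :
    ∃ (U : unitaryGroup m ℂ) (d : m → ℝ), A = conjStarAlgAut ℂ _ U (diagonal fun i => (d i : ℂ)) :=
  ⟨_, _, hA.spectral_theorem⟩

lemma Matrix.PosDef.exists_conj_diagonal {A : Matrix m m ℂ} (hA : A.PosDef) :
    ∃ (U : unitaryGroup m ℂ) (d : m → ℝ), (∀ i, 0 < d i) ∧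
      A = conjStarAlgAut ℂ _ U (diagonal fun i => (d i : ℂ)) :=
  ⟨_, _, hA.eigenvalues_pos, hA.1.spectral_theorem⟩

lemma mlog_smul_of_posDef {A : Matrix m m ℂ} (hA : A.PosDef) {c : ℝ} (hc : 0 < c) :
    mlog ((c : ℂ) • A) = (Real.log c : ℂ) • 1 + mlog A := by
  obtain ⟨U, d, hd, rfl⟩ := hA.exists_conj_diagonal
  have hcd : (c : ℂ) • diagonal (fun i => (d i : ℂ)) = diagonal fun i => ((c * d i : ℝ) : ℂ) := by
    rw [← diagonal_smul]; congr; ext i; simp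
  have hlog : (diagonal fun i => (Real.log (c * d i) : ℂ)) =
      (Real.log c : ℂ) • 1 + diagonal fun i => (Real.log (d i) : ℂ) := by
    rw [smul_one_eq_diagonal, diagonal_add]
    congr; ext i; rw [Real.log_mul hc.ne' (hd i).ne']; push_cast; rfl
  rw [← map_smul, hcd, mlog_conj_diagonal, mlog_conj_diagonal, hlog, map_add, map_smul, map_one]

lemma mlog_kronecker_of_posDef {A : Matrix m m ℂ} {B : Matrix n n ℂ} (hA : A.PosDef)
    (hB : B.PosDef) : mlog (A ⊗ₖ B) = mlog A ⊗ₖ 1 + 1 ⊗ₖ mlog B := by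
  obtain ⟨U, a, ha, rfl⟩ := hA.exists_conj_diagonal
  obtain ⟨V, b, hb, rfl⟩ := hB.exists_conj_diagonal
  have hab : (diagonal fun i => (a i : ℂ)) ⊗ₖ (diagonal fun j => (b j : ℂ)) =
      diagonal fun ij : m × n => ((a ij.1 * b ij.2 : ℝ) : ℂ) := by
    rw [diagonal_kronecker_diagonal]; push_cast; rfl
  have hlog : (diagonal fun ij : m × n => (Real.log (a ij.1 * b ij.2) : ℂ)) =
      (diagonal fun i => (Real.log (a i) : ℂ)) ⊗ₖ 1 +
        1 ⊗ₖ diagonal fun j => (Real.log (b j) : ℂ) := by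
    rw [← diagonal_one, ← diagonal_one, diagonal_kronecker_diagonal, diagonal_kronecker_diagonal,
      diagonal_add]
    congr; ext ij; rw [Real.log_mul (ha _).ne' (hb _).ne']; simp
  rw [← UnitaryGroup.conjStarAlgAut_kronecker_kronecker, hab, mlog_conj_diagonal,
    mlog_conj_diagonal, mlog_conj_diagonal, hlog, map_add,
    UnitaryGroup.conjStarAlgAut_kronecker_kronecker,
    UnitaryGroup.conjStarAlgAut_kronecker_kronecker, map_one, map_one]

lemma mlog_inv_of_posDef {A : Matrix m m ℂ} (hA : A.PosDef) : mlog A⁻¹ = -mlog A := by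
  obtain ⟨U, d, hd, rfl⟩ := hA.exists_conj_diagonal
  have hinv : (conjStarAlgAut ℂ _ U (diagonal fun i => (d i : ℂ)))⁻¹ =
      conjStarAlgAut ℂ _ U (diagonal fun i => ((d i)⁻¹ : ℝ)) := by
    refine inv_eq_left_inv ?_
    rw [← map_mul, diagonal_mul_diagonal, ← map_one (conjStarAlgAut ℂ (Matrix m m ℂ) U),
      ← diagonal_one]
    congr; ext i; push_cast; exact inv_mul_cancel₀ (by exact_mod_cast (hd i).ne')
  rw [hinv, mlog_conj_diagonal, mlog_conj_diagonal, ← map_neg, diagonal_neg]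
  simp_rw [Real.log_inv]; push_cast; rfl

lemma Matrix.IsHermitian.mlog_transpose {A : Matrix m m ℂ} (hA : A.IsHermitian) :
    mlog Aᵀ = (mlog A)ᵀ := by
  obtain ⟨U, d, rfl⟩ := hA.exists_conj_diagonal
  rw [← UnitaryGroup.conjStarAlgAut_map_star_transpose, diagonal_transpose, mlog_conj_diagonal,
    mlog_conj_diagonal, ← UnitaryGroup.conjStarAlgAut_map_star_transpose, diagonal_transpose]

lemma mlog_blockDiagonal' [Fintype ι] [DecidableEq ι] {m' : ι → Type*} [∀ i, Fintype (m' i)]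
    [∀ i, DecidableEq (m' i)] {M : ∀ i, Matrix (m' i) (m' i) ℂ} (hM : ∀ i, (M i).IsHermitian) :
    mlog (blockDiagonal' M) = blockDiagonal' fun i => mlog (M i) := by
  choose U d hUd using fun i => (hM i).exists_conj_diagonal
  obtain rfl : M = fun i => conjStarAlgAut ℂ _ (U i) (diagonal fun j => (d i j : ℂ)) := funext hUd
  simp_rw [← UnitaryGroup.conjStarAlgAut_blockDiagonal'_blockDiagonal', blockDiagonal'_diagonal,
    mlog_conj_diagonal]
  rw [← UnitaryGroup.conjStarAlgAut_blockDiagonal'_blockDiagonal', blockDiagonal'_diagonal]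

end SpectralFunctions

section QuadraticForms

variable {m n ι : Type*} [Fintype m]

lemma blockDiagonal'_mulVec_apply [Fintype ι] [DecidableEq ι] {α : Type*}
    [NonUnitalNonAssocSemiring α] {m' : ι → Type*} [∀ i, Fintype (m' i)]
    (M : ∀ i, Matrix (m' i) (m' i) α)
    (v : (i : ι) × m' i → α) (k : (i : ι) × m' i) :
    (blockDiagonal' M *ᵥ v) k = (M k.1 *ᵥ fun j => v ⟨k.1, j⟩) k.2 := by
  obtain ⟨i, a⟩ := k
  simp only [mulVec, dotProduct, Fintype.sum_sigma]
  rw [Finset.sum_eq_single i]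
  · simp [blockDiagonal'_apply_eq]
  · intro j _ hj
    exact Finset.sum_eq_zero fun b _ => by rw [blockDiagonal'_apply_ne _ _ _ (Ne.symm hj), zero_mul]
  · simp

lemma star_dotProduct_blockDiagonal'_mulVec [Fintype ι] [DecidableEq ι] {α : Type*}
    [NonUnitalNonAssocSemiring α] [Star α] {m' : ι → Type*} [∀ i, Fintype (m' i)]
    (M : ∀ i, Matrix (m' i) (m' i) α) (v : (i : ι) × m' i → α) :
    star v ⬝ᵥ (blockDiagonal' M *ᵥ v) =
      ∑ i, star (fun j => v ⟨i, j⟩) ⬝ᵥ (M i *ᵥ fun j => v ⟨i, j⟩) := by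
  simp only [dotProduct, Fintype.sum_sigma, blockDiagonal'_mulVec_apply, Pi.star_apply]

lemma star_vec_transpose_dotProduct_kronecker_mulVec [Fintype n] (R : Matrix m n ℂ)
    (Y : Matrix m m ℂ) (Z : Matrix n n ℂ) :
    star (vec Rᵀ) ⬝ᵥ ((Y ⊗ₖ Z) *ᵥ vec Rᵀ) = (Rᴴ * Y * R * Zᵀ).trace := by
  rw [kronecker_mulVec_vec, star_vec_dotProduct_vec, ← trace_transpose]
  simp only [transpose_mul, transpose_transpose, conjTranspose_transpose_eq_transpose_conjTranspose]
  rw [trace_mul_comm _ Rᴴ]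
  simp only [Matrix.mul_assoc]

lemma of_sum_mul_star_eq_transpose (R : Matrix m n ℂ) :
    (of fun b b' => ∑ a, R a b * star (R a b')) = (Rᴴ * R)ᵀ := by
  ext b b'
  simp [mul_apply, mul_comm]

end QuadraticForms

section ArakiBlock

variable {m : Type*} [Fintype m] [DecidableEq m]

lemma star_vec_dotProduct_mlog_smul_kronecker_mulVec {ρ σ : Matrix m m ℂ} (hρ : ρ.PosDef)
    (hρ1 : ρ.trace = 1) (hσ : σ.PosDef) {c : ℝ} (hc : 0 < c) :
    star (vec (mpow ρ (1 / 2))ᵀ) ⬝ᵥ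
        (mlog ((c : ℂ) • (σ ⊗ₖ (ρᵀ)⁻¹)) *ᵥ vec (mpow ρ (1 / 2))ᵀ) =
      Real.log c + (ρ * mlog σ).trace - (ρ * mlog ρ).trace := by
  set R := mpow ρ (1 / 2)
  have hR : Rᴴ = R := isHermitian_mpow ρ _
  have hRR : R * R = ρ := mpow_half_mul_self hρ.posSemidef
  have hlog : mlog ((c : ℂ) • (σ ⊗ₖ (ρᵀ)⁻¹)) =
      (Real.log c : ℂ) • (1 ⊗ₖ 1) + mlog σ ⊗ₖ 1 + 1 ⊗ₖ (-(mlog ρ)ᵀ) := by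
    rw [mlog_smul_of_posDef (hσ.kronecker hρ.transpose.inv) hc,
      mlog_kronecker_of_posDef hσ hρ.transpose.inv, mlog_inv_of_posDef hρ.transpose,
      hρ.1.mlog_transpose, one_kronecker_one, add_assoc]
  rw [hlog, add_mulVec, add_mulVec, smul_mulVec, dotProduct_add, dotProduct_add,
    dotProduct_smul]
  simp only [star_vec_transpose_dotProduct_kronecker_mulVec, transpose_one, mul_one, hR, hRR,
    transpose_neg, transpose_transpose, mul_neg, trace_neg, hρ1]
  rw [trace_mul_cycle, hRR, smul_eq_mul, mul_one, sub_eq_add_neg]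

end ArakiBlock

theorem araki_relEnt_block_general {ι : Type*} [Fintype ι] [DecidableEq ι] (dA : ι → ℕ)
    (p q : ι → ℝ) (hp : ∀ A, 0 < p A)
    (hq : ∀ A, 0 < q A)
    (ρ σ : ∀ A, Matrix (Fin (dA A)) (Fin (dA A)) ℂ)
    (hρ : ∀ A, IsDensity (ρ A))
    (hρpd : ∀ A, (ρ A).PosDef) (hσpd : ∀ A, (σ A).PosDef)
    -- the purifications `|ψ_A⟩ = (ρ_A^{1/2} ⊗ I) Σ_i e_i ⊗ e_i`
    (ψ : ∀ A, Fin (dA A) × Fin (dA A) → ℂ)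
    (hψ : ∀ A, ψ A = fun ij => mpow (ρ A) (1 / 2) ij.1 ij.2)
    -- the global vector `|Ψ⟩ = ⊕_A √p_A |ψ_A⟩`
    (Ψ : ((A : ι) × (Fin (dA A) × Fin (dA A))) → ℂ)
    (hΨ : ∀ A ij, Ψ ⟨A, ij⟩ = (Real.sqrt (p A) : ℂ) * ψ A ij)
    -- the reduced density matrices of `|ψ_A⟩` on the second factor
    (ρbar : ∀ A, Matrix (Fin (dA A)) (Fin (dA A)) ℂ)
    (hρbar : ∀ A, ρbar A = Matrix.of fun b b' => ∑ a, ψ A (a, b) * star (ψ A (a, b')))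
    -- the relative modular operator `Δ = ⊕_A (q_A/p_A) σ_A ⊗ (ρ̄_A)⁻¹`
    (Δ : Matrix ((A : ι) × (Fin (dA A) × Fin (dA A)))
        ((A : ι) × (Fin (dA A) × Fin (dA A))) ℂ)
    (hΔ : Δ = Matrix.blockDiagonal' (fun A => ((q A / p A : ℝ) : ℂ) • (σ A ⊗ₖ (ρbar A)⁻¹))) :
    -(star Ψ ⬝ᵥ ((mlog Δ) *ᵥ Ψ)).re =
      ∑ A, p A * Real.log (p A / q A) +
        ∑ A, p A * ((ρ A * mlog (ρ A)).trace - (ρ A * mlog (σ A)).trace).re := by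
  have hρbar' : ∀ A, ρbar A = (ρ A)ᵀ := fun A => by
    simp only [hρbar, hψ]
    rw [of_sum_mul_star_eq_transpose, (isHermitian_mpow _ _).eq,
      mpow_half_mul_self (hρpd A).posSemidef]
  have hΨA : ∀ A, (fun ij => Ψ ⟨A, ij⟩) = (Real.sqrt (p A) : ℂ) • vec (mpow (ρ A) (1 / 2))ᵀ :=
    fun A => funext fun ij => by rw [hΨ, hψ]; rfl
  have hblockHerm : ∀ A, (((q A / p A : ℝ) : ℂ) • (σ A ⊗ₖ (ρbar A)⁻¹)).IsHermitian := fun A => by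
    rw [hρbar']
    exact ((hσpd A).kronecker (hρpd A).transpose.inv).1.smul (Complex.conj_ofReal _)
  have hterm : ∀ A, star (fun ij => Ψ ⟨A, ij⟩) ⬝ᵥ
      (mlog (((q A / p A : ℝ) : ℂ) • (σ A ⊗ₖ (ρbar A)⁻¹)) *ᵥ fun ij => Ψ ⟨A, ij⟩) =
        p A * (Real.log (q A / p A) + (ρ A * mlog (σ A)).trace - (ρ A * mlog (ρ A)).trace) := by
    intro A
    rw [hΨA, hρbar', star_smul, mulVec_smul, dotProduct_smul, smul_dotProduct,
      star_vec_dotProduct_mlog_smul_kronecker_mulVec (hρpd A) (hρ A).2 (hσpd A)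
        (div_pos (hq A) (hp A)), smul_smul, smul_eq_mul, Complex.star_def, Complex.conj_ofReal,
      ← Complex.ofReal_mul, Real.mul_self_sqrt (hp A).le]
  rw [hΔ, mlog_blockDiagonal' hblockHerm, star_dotProduct_blockDiagonal'_mulVec]
  simp_rw [hterm]
  rw [Complex.re_sum, ← Finset.sum_neg_distrib, ← Finset.sum_add_distrib]
  refine Finset.sum_congr rfl fun A _ => ?_
  rw [← inv_div, Real.log_inv, Complex.re_ofReal_mul, Complex.sub_re, Complex.add_re,
    Complex.ofReal_re, Complex.sub_re]
  ring

/-- Araki's relative entropy `-⟨Ψ| log Δ |Ψ⟩` in the finite-dimensional block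
setting equals the algebraic relative entropy
`Σ_A p_A log(p_A/q_A) + Σ_A p_A [Tr(ρ_A log ρ_A) - Tr(ρ_A log σ_A)]`, where
`|Ψ⟩ = ⊕_A √p_A (ρ_A^{1/2} ⊗ I) Σ_i e_i ⊗ e_i` and
`Δ = ⊕_A (q_A/p_A) σ_A ⊗ (ρ̄_A)⁻¹`, with `ρ̄_A` the reduced density matrix of `|ψ_A⟩` on
the second tensor factor. -/
theorem araki_relEnt_block {ι : Type*} [Fintype ι] [DecidableEq ι] (dA : ι → ℕ)
    (p q : ι → ℝ) (hp : ∀ A, 0 < p A) (hp1 : ∑ A, p A = 1)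
    (hq : ∀ A, 0 < q A) (hq1 : ∑ A, q A = 1)
    (ρ σ : ∀ A, Matrix (Fin (dA A)) (Fin (dA A)) ℂ)
    (hρ : ∀ A, IsDensity (ρ A)) (hσ : ∀ A, IsDensity (σ A))
    (hρpd : ∀ A, (ρ A).PosDef) (hσpd : ∀ A, (σ A).PosDef)
    -- the purifications `|ψ_A⟩ = (ρ_A^{1/2} ⊗ I) Σ_i e_i ⊗ e_i`
    (ψ : ∀ A, Fin (dA A) × Fin (dA A) → ℂ)
    (hψ : ∀ A, ψ A = fun ij => mpow (ρ A) (1 / 2) ij.1 ij.2)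
    -- the global vector `|Ψ⟩ = ⊕_A √p_A |ψ_A⟩`
    (Ψ : ((A : ι) × (Fin (dA A) × Fin (dA A))) → ℂ)
    (hΨ : ∀ A ij, Ψ ⟨A, ij⟩ = (Real.sqrt (p A) : ℂ) * ψ A ij)
    -- the reduced density matrices of `|ψ_A⟩` on the second factor
    (ρbar : ∀ A, Matrix (Fin (dA A)) (Fin (dA A)) ℂ)
    (hρbar : ∀ A, ρbar A = Matrix.of fun b b' => ∑ a, ψ A (a, b) * star (ψ A (a, b')))
    -- the relative modular operator `Δ = ⊕_A (q_A/p_A) σ_A ⊗ (ρ̄_A)⁻¹`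
    (Δ : Matrix ((A : ι) × (Fin (dA A) × Fin (dA A)))
        ((A : ι) × (Fin (dA A) × Fin (dA A))) ℂ)
    (hΔ : Δ = Matrix.blockDiagonal' (fun A => ((q A / p A : ℝ) : ℂ) • (σ A ⊗ₖ (ρbar A)⁻¹))) :
    -(star Ψ ⬝ᵥ ((mlog Δ) *ᵥ Ψ)).re =
      ∑ A, p A * Real.log (p A / q A) +
        ∑ A, p A * ((ρ A * mlog (ρ A)).trace - (ρ A * mlog (σ A)).trace).re :=
  araki_relEnt_block_general dA p q hp hq ρ σ hρ hρpd hσpd ψ hψ Ψ hΨ ρbar hρbar Δ hΔ
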